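/- arXiv:0909.2129 — 2 statements merged into one kernel-verified Lean document; each statement's English description precedes it below -/
import Mathlib

section
/- Let C ⊆ R^n be a polyhedral cone of dimension m, and let D_1, ..., D_s ⊆ R^n be polyhedral cones with C ⊆ D_1 ∪ ... ∪ D_s, where dim D_1 = m and dim D_i < m for i = 2, ..., s. Then C ⊆ D_1. -/
/-- A polyhedral (finitely generated) cone in `ℝⁿ`. -/
def IsPolyCone {n : ℕ} (C : Set (EuclideanSpace ℝ (Fin n))) : Prop :=
  ∃ (m : ℕ) (v : Fin m → EuclideanSpace ℝ (Fin n)),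
    C = {x | ∃ c : Fin m → ℝ, (∀ i, 0 ≤ c i) ∧ x = ∑ i, c i • v i}

/-- `F` is a face of the cone `C` (cut out by a supporting linear functional,
or `C` itself). -/
def IsFaceOf {n : ℕ} (F C : Set (EuclideanSpace ℝ (Fin n))) : Prop :=
  F = C ∨ ∃ l : EuclideanSpace ℝ (Fin n) →ₗ[ℝ] ℝ,
    (∀ x ∈ C, l x ≤ 0) ∧ F = {x ∈ C | l x = 0}

/-- A polyhedral fan in `ℝⁿ`: a finite collection of polyhedral cones, closed
under taking faces, such that any two cones intersect in a common face. -/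
structure PolyFan (n : ℕ) where
  cones : Set (Set (EuclideanSpace ℝ (Fin n)))
  finite : cones.Finite
  poly : ∀ C ∈ cones, IsPolyCone C
  faces_mem : ∀ C ∈ cones, ∀ F, IsFaceOf F C → F ∈ cones
  inter_face : ∀ C ∈ cones, ∀ D ∈ cones, IsFaceOf (C ∩ D) C

/-- The support of a fan: the union of its cones. -/
def PolyFan.support {n : ℕ} (F : PolyFan n) : Set (EuclideanSpace ℝ (Fin n)) :=
  ⋃ C ∈ F.cones, C

/-- The dimension of a cone: the dimension of its affine hull. -/
noncomputable def coneDim {n : ℕ} (C : Set (EuclideanSpace ℝ (Fin n))) : ℕ :=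
  Module.finrank ℝ (affineSpan ℝ C).direction

/-- The relative interior of a set. -/
def relint {n : ℕ} (C : Set (EuclideanSpace ℝ (Fin n))) : Set (EuclideanSpace ℝ (Fin n)) :=
  intrinsicInterior ℝ C

/-- A maximal cone of a fan. -/
def PolyFan.IsMaximal {n : ℕ} (F : PolyFan n) (C : Set (EuclideanSpace ℝ (Fin n))) : Prop :=
  C ∈ F.cones ∧ ∀ D ∈ F.cones, C ⊆ D → D = C

/-!
A segment meets a linear subspace that does not contain both of its endpoints in at most one
point. Hence a convex set is never covered by finitely many subspaces none of which contains it,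
and its points lying off all of them are dense in it: approach any point along the segment towards
one such point. The cones `D i` with `i ≠ 0` span subspaces of dimension `< m`, which cannot
contain `C`; so the points of `C` off these spans, all of which lie in `D 0`, are dense in `C`.
Finitely generated cones are closed (by Carathéodory's theorem they are finite unions of
linearly independent cones), so `C ⊆ D 0`.
-/

open Set AffineMap Filter Topology

section Lines

variable {E : Type*} [AddCommGroup E] [Module ℝ E]

theorem Submodule.lineMap_mem_of_lineMap_mem (W : Submodule ℝ E) {a b : E} {t₁ t₂ : ℝ}
    (hne : t₁ ≠ t₂) (h₁ : lineMap a b t₁ ∈ W) (h₂ : lineMap a b t₂ ∈ W) (t : ℝ) :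
    lineMap a b t ∈ W := by
  simp only [lineMap_apply_module'] at h₁ h₂ ⊢
  have hdir : b - a ∈ W := by
    have : (t₁ - t₂) • (b - a) ∈ W := by convert W.sub_mem h₁ h₂ using 1; module
    exact (W.smul_mem_iff (sub_ne_zero.2 hne)).1 this
  have hbase : a ∈ W := by simpa using W.sub_mem h₁ (W.smul_mem t₁ hdir)
  exact W.add_mem (W.smul_mem t hdir) hbase

theorem Submodule.subsingleton_setOf_lineMap_mem (W : Submodule ℝ E) {a b : E} {t₀ : ℝ}
    (h : lineMap a b t₀ ∉ W) : {t : ℝ | lineMap a b t ∈ W}.Subsingleton := by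
  intro t₁ h₁ t₂ h₂
  by_contra hne
  exact h (W.lineMap_mem_of_lineMap_mem hne h₁ h₂ t₀)

theorem finite_setOf_lineMap_mem_biUnion {ι : Type*} (s : Finset ι) (W : ι → Submodule ℝ E)
    {a b : E} {t₀ : ℝ} (h : ∀ i ∈ s, lineMap a b t₀ ∉ W i) :
    {t : ℝ | lineMap a b t ∈ ⋃ i ∈ s, (W i : Set E)}.Finite := by
  have hunion : {t : ℝ | lineMap a b t ∈ ⋃ i ∈ s, (W i : Set E)} =
      ⋃ i ∈ s, {t : ℝ | lineMap a b t ∈ W i} := by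
    ext; simp
  rw [hunion]
  exact s.finite_toSet.biUnion fun i hi => ((W i).subsingleton_setOf_lineMap_mem (h i hi)).finite

theorem Convex.exists_subset_of_subset_biUnion_submodule {C : Set E} (hC : Convex ℝ C)
    (hne : C.Nonempty) {ι : Type*} (s : Finset ι) (W : ι → Submodule ℝ E)
    (hcover : C ⊆ ⋃ i ∈ s, (W i : Set E)) : ∃ i ∈ s, C ⊆ W i := by
  classical
  induction s using Finset.induction_on with
  | empty =>
    obtain ⟨x, hx⟩ := hne
    simpa using hcover hx
  | insert j s _ ih =>
    by_cases hCj : C ⊆ W j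
    · exact ⟨j, Finset.mem_insert_self j s, hCj⟩
    obtain ⟨c, hcC, hcj⟩ := not_subset.1 hCj
    suffices hcover' : C ⊆ ⋃ i ∈ s, (W i : Set E) by
      obtain ⟨i, hi, hCi⟩ := ih hcover'
      exact ⟨i, Finset.mem_insert_of_mem hi, hCi⟩
    intro x hxC
    by_contra hx
    have hxj : x ∈ W j := by simpa [hx] using hcover hxC
    have hfin := finite_setOf_lineMap_mem_biUnion s W (a := c) (b := x) (t₀ := 1)
      (by simpa using hx)
    -- the half-open segment `[c, x)` lies in `C` but misses `W j`, since `c ∉ W j` and `x ∈ W j`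
    refine (Ico_infinite zero_lt_one).mono (fun t ht => ?_) hfin
    have htC := hC.lineMap_mem hcC hxC ⟨ht.1, ht.2.le⟩
    have htj : lineMap c x t ∉ W j := fun h =>
      ht.2.ne ((W j).subsingleton_setOf_lineMap_mem (t₀ := 0) (by simpa) h (by simpa using hxj))
    simpa [htj] using hcover htC

theorem Convex.subset_closure_diff_biUnion_submodule [TopologicalSpace E]
    [IsTopologicalAddGroup E] [ContinuousSMul ℝ E] {C : Set E} (hC : Convex ℝ C)
    {ι : Type*} (s : Finset ι) (W : ι → Submodule ℝ E) (h : ∀ i ∈ s, ¬ C ⊆ W i) :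
    C ⊆ closure (C \ ⋃ i ∈ s, (W i : Set E)) := by
  intro x hx
  obtain ⟨y, hyC, hy⟩ : ∃ y ∈ C, y ∉ ⋃ i ∈ s, (W i : Set E) := by
    by_contra! hcover
    obtain ⟨i, hi, hCi⟩ := hC.exists_subset_of_subset_biUnion_submodule ⟨x, hx⟩ s W hcover
    exact h i hi hCi
  have hfin := finite_setOf_lineMap_mem_biUnion s W (a := x) (b := y) (t₀ := 1)
    (by simpa using hy)
  refine mem_closure_of_tendsto (f := lineMap x y) (b := 𝓝[>] (0 : ℝ)) ?_ ?_
  · exact (lineMap_continuous.tendsto' 0 x (by simp)).mono_left nhdsWithin_le_nhds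
  · have hcofinite : 𝓝[>] (0 : ℝ) ≤ cofinite :=
      (nhdsWithin_mono 0 fun t ht => ne_of_gt ht).trans (nhdsNE_le_cofinite 0)
    filter_upwards [Ioo_mem_nhdsGT one_pos, hcofinite hfin.compl_mem_cofinite] with t ht htW
    exact ⟨hC.lineMap_mem hx hyC ⟨ht.1.le, ht.2.le⟩, htW⟩

theorem Convex.subset_of_subset_union_biUnion_submodule [TopologicalSpace E]
    [IsTopologicalAddGroup E] [ContinuousSMul ℝ E] {C D : Set E} (hC : Convex ℝ C)
    (hD : IsClosed D) {ι : Type*} (s : Finset ι) (W : ι → Submodule ℝ E)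
    (h : ∀ i ∈ s, ¬ C ⊆ W i) (hcover : C ⊆ D ∪ ⋃ i ∈ s, (W i : Set E)) : C ⊆ D :=
  calc C ⊆ closure (C \ ⋃ i ∈ s, (W i : Set E)) :=
        hC.subset_closure_diff_biUnion_submodule s W h
    _ ⊆ closure D := closure_mono fun _ hx => (hcover hx.1).resolve_right hx.2
    _ = D := hD.closure_eq

end Lines

section ConicHull

variable {E : Type*} [AddCommGroup E] [Module ℝ E] {ι : Type*} [Fintype ι]

def conicHull (v : ι → E) : Set E :=
  Fintype.linearCombination ℝ v '' Ici 0

theorem convex_conicHull (v : ι → E) : Convex ℝ (conicHull v) :=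
  (convex_Ici 0).linear_image _

theorem zero_mem_conicHull (v : ι → E) : (0 : E) ∈ conicHull v :=
  ⟨0, Set.mem_Ici.2 le_rfl, map_zero _⟩

/-- Carathéodory's exchange step: move along a linear dependence until a coefficient vanishes. -/
theorem exists_nonneg_coeff_eq_zero_of_not_linearIndependent
    {v : ι → E} (hv : ¬ LinearIndependent ℝ v) {c : ι → ℝ} (hc : 0 ≤ c) :
    ∃ c' : ι → ℝ, 0 ≤ c' ∧ (∃ i, c' i = 0) ∧ ∑ i, c' i • v i = ∑ i, c i • v i := by
  classical
  obtain ⟨g, hg, j, hj⟩ : ∃ g : ι → ℝ, ∑ i, g i • v i = 0 ∧ ∃ j, g j < 0 := by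
    obtain ⟨g, hg, j, hj⟩ := Fintype.not_linearIndependent_iff.1 hv
    rcases hj.lt_or_gt with hj | hj
    · exact ⟨g, hg, j, hj⟩
    · exact ⟨-g, by simp [neg_smul, hg], j, by simpa using hj⟩
  obtain ⟨i₀, hi₀, hmin⟩ := Finset.exists_min_image ({i | g i < 0} : Finset ι)
    (fun i => c i / -g i) ⟨j, by simpa using hj⟩
  simp only [Finset.mem_filter, Finset.mem_univ, true_and] at hi₀ hmin
  set t := c i₀ / -g i₀
  have ht : 0 ≤ t := div_nonneg (hc i₀) (by linarith)
  refine ⟨c + t • g, fun i => ?_, ⟨i₀, ?_⟩, ?_⟩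
  · rcases lt_or_ge (g i) 0 with hgi | hgi
    · have := (le_div_iff₀ (neg_pos.2 hgi)).1 (hmin i hgi)
      simp only [Pi.zero_apply, Pi.add_apply, Pi.smul_apply, smul_eq_mul]
      linarith
    · simpa using add_nonneg (hc i) (mul_nonneg ht hgi)
  · simp only [Pi.add_apply, Pi.smul_apply, smul_eq_mul, t]
    field_simp [hi₀.ne]
    ring
  · simp [add_smul, Finset.sum_add_distrib, mul_smul, ← Finset.smul_sum, hg]

theorem conicHull_eq_iUnion_of_not_linearIndependent {k : ℕ} {v : Fin (k + 1) → E}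
    (hv : ¬ LinearIndependent ℝ v) :
    conicHull v = ⋃ i : Fin (k + 1), conicHull (v ∘ i.succAbove) := by
  apply Subset.antisymm
  · rintro _ ⟨c, hc, rfl⟩
    obtain ⟨c', hc', ⟨i, hi⟩, hsum⟩ := exists_nonneg_coeff_eq_zero_of_not_linearIndependent hv hc
    refine mem_iUnion.2 ⟨i, c' ∘ i.succAbove, fun j => hc' _, ?_⟩
    simp [Fintype.linearCombination_apply, ← hsum, Fin.sum_univ_succAbove _ i, hi]
  · refine iUnion_subset fun i => ?_
    rintro _ ⟨c, hc, rfl⟩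
    refine ⟨i.insertNth 0 c, Fin.le_insertNth_iff.2 ⟨le_rfl, hc⟩, ?_⟩
    simp [Fintype.linearCombination_apply, Fin.sum_univ_succAbove _ i]

variable [TopologicalSpace E] [IsTopologicalAddGroup E] [ContinuousSMul ℝ E] [T2Space E]

theorem isClosed_conicHull_of_linearIndependent {v : ι → E}
    (hv : LinearIndependent ℝ v) : IsClosed (conicHull v) := by
  have hker : LinearMap.ker (Fintype.linearCombination ℝ v) = ⊥ :=
    LinearMap.ker_eq_bot.2 (linearIndependent_iff_injective_fintypeLinearCombination.1 hv)
  exact (LinearMap.isClosedEmbedding_of_injective hker).isClosedMap _ isClosed_Ici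

theorem isClosed_conicHull {k : ℕ} (v : Fin k → E) : IsClosed (conicHull v) := by
  induction k with
  | zero => exact isClosed_conicHull_of_linearIndependent linearIndependent_empty_type
  | succ k ih =>
    by_cases hv : LinearIndependent ℝ v
    · exact isClosed_conicHull_of_linearIndependent hv
    · rw [conicHull_eq_iUnion_of_not_linearIndependent hv]
      exact isClosed_iUnion_of_finite fun i => ih _

end ConicHull

section PolyCone

variable {n : ℕ} {C : Set (EuclideanSpace ℝ (Fin n))}

theorem IsPolyCone.exists_eq_conicHull (hC : IsPolyCone C) :
    ∃ (k : ℕ) (v : Fin k → EuclideanSpace ℝ (Fin n)), C = conicHull v := by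
  obtain ⟨k, v, rfl⟩ := hC
  refine ⟨k, v, ?_⟩
  ext x
  simp [conicHull, Fintype.linearCombination_apply, Pi.le_def, eq_comm]

theorem IsPolyCone.convex (hC : IsPolyCone C) : Convex ℝ C := by
  obtain ⟨k, v, rfl⟩ := hC.exists_eq_conicHull
  exact convex_conicHull v

theorem IsPolyCone.zero_mem (hC : IsPolyCone C) : (0 : EuclideanSpace ℝ (Fin n)) ∈ C := by
  obtain ⟨k, v, rfl⟩ := hC.exists_eq_conicHull
  exact zero_mem_conicHull v

theorem IsPolyCone.isClosed (hC : IsPolyCone C) : IsClosed C := by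
  obtain ⟨k, v, rfl⟩ := hC.exists_eq_conicHull
  exact isClosed_conicHull v

theorem coneDim_le_of_subset_span {S T : Set (EuclideanSpace ℝ (Fin n))} (hT : 0 ∈ T)
    (h : S ⊆ Submodule.span ℝ T) : coneDim S ≤ coneDim T := by
  unfold coneDim
  rw [direction_affineSpan, direction_affineSpan, vectorSpan_eq_span_vsub_set_right ℝ hT]
  refine Submodule.finrank_mono ?_
  rw [vectorSpan_def, Submodule.span_le]
  rintro _ ⟨a, ha, b, hb, rfl⟩
  simpa using Submodule.sub_mem _ (h ha) (h hb)

end PolyCone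

theorem stmt4_general {n : ℕ} (m s : ℕ) (hs : 0 < s)
    (C : Set (EuclideanSpace ℝ (Fin n))) (D : Fin s → Set (EuclideanSpace ℝ (Fin n)))
    (hC : IsPolyCone C) (hD : ∀ i, IsPolyCone (D i))
    (hdimC : coneDim C = m)
    (hdimDi : ∀ i : Fin s, i ≠ ⟨0, hs⟩ → coneDim (D i) < m)
    (hcover : C ⊆ ⋃ i, D i) :
    C ⊆ D ⟨0, hs⟩ := by
  classical
  refine hC.convex.subset_of_subset_union_biUnion_submodule (hD _).isClosed
    (Finset.univ.erase ⟨0, hs⟩) (fun i => Submodule.span ℝ (D i)) ?_ ?_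
  · intro i hi hCi
    have := coneDim_le_of_subset_span (hD i).zero_mem hCi
    have := hdimDi i (Finset.ne_of_mem_erase hi)
    omega
  · intro x hx
    obtain ⟨i, hi⟩ := mem_iUnion.1 (hcover hx)
    by_cases h0 : i = ⟨0, hs⟩
    · exact Or.inl (h0 ▸ hi)
    · exact Or.inr (mem_biUnion (Finset.mem_erase.2 ⟨h0, Finset.mem_univ i⟩)
        (Submodule.subset_span hi))

/-- If an `m`-dimensional polyhedral cone `C` is covered by polyhedral
cones `D 0, …, D (s-1)` where `D 0` has dimension `m` and all the others have dimension
`< m`, then `C ⊆ D 0`. -/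
theorem stmt4 {n : ℕ} (m s : ℕ) (hs : 0 < s)
    (C : Set (EuclideanSpace ℝ (Fin n))) (D : Fin s → Set (EuclideanSpace ℝ (Fin n)))
    (hC : IsPolyCone C) (hD : ∀ i, IsPolyCone (D i))
    (hdimC : coneDim C = m) (hdimD0 : coneDim (D ⟨0, hs⟩) = m)
    (hdimDi : ∀ i : Fin s, i ≠ ⟨0, hs⟩ → coneDim (D i) < m)
    (hcover : C ⊆ ⋃ i, D i) :
    C ⊆ D ⟨0, hs⟩ :=
  stmt4_general m s hs C D hC hD hdimC hdimDi hcover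
end

section
/- For 0 < m < n, let W_n^m denote the fan in R^n whose cones are C_A = {ω ∈ R^n : ω_i = min_k ω_k for all i ∈ A} for subsets A ⊆ {1,...,n} with |A| ≥ n−m+1. Then every fan F in R^n with support equal to the support of W_n^m refines W_n^m: for every relatively open cone C̊ of F there is a relatively open cone C̊_A of W_n^m with C̊ ⊆ C̊_A. -/
/-- The cone `C_A = {ω : ω_i = min_k ω_k for all i ∈ A}` of the fan `W_n`. -/
def coneW {n : ℕ} (A : Finset (Fin n)) : Set (EuclideanSpace ℝ (Fin n)) :=
  {ω | ∀ i ∈ A, ∀ k, ω i ≤ ω k}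

open scoped Classical in
/-- The set of indices at which `ω` attains its minimal coordinate. -/
noncomputable def argminSet {n : ℕ} (ω : EuclideanSpace ℝ (Fin n)) : Finset (Fin n) :=
  Finset.univ.filter (fun i => ∀ k, ω i ≤ ω k)

/-!
Since a point whose minimal coordinates are exactly `A` lies in the relative interior of `C_A`,
it suffices that all relative interior points of a cone `C` of `F` have the same minimal
coordinates. For a point `x` of the support, `i` is a minimal coordinate exactly when moving `x`
in the direction `-eᵢ` leaves the support at once: afterwards `i` is the only minimal coordinate,
while `n - m + 1 ≥ 2` of them are needed. For a fan this property is constant on the relative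
interior of a cone: if `x - δ eᵢ` lies in a cone `D` for arbitrarily small `δ > 0`, then `x ∈ D`
because `D` is closed, so the face `C ∩ D` of `C` contains a relative interior point and `C ⊆ D`;
convexity of `D` then carries the perturbations over to any other relative interior point `y`.
Closedness of a finitely generated cone comes from the conic Carathéodory theorem.
-/

open Filter Set Topology

section ConicCaratheodory

variable {ι E : Type*} [Fintype ι] [AddCommGroup E] [Module ℝ E] (v : ι → E)

lemma exists_nonneg_sum_smul_eq_support_ssubset {c : ι → ℝ} (hc : 0 ≤ c)
    (hdep : ¬ LinearIndepOn ℝ v (Function.support c)) :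
    ∃ d : ι → ℝ, 0 ≤ d ∧ ∑ i, d i • v i = ∑ i, c i • v i ∧
      Function.support d ⊂ Function.support c := by
  classical
  obtain ⟨t, g, hts, hgt, hgsum, i₀, -, hgi₀⟩ : ∃ (t : Finset ι) (g : ι → ℝ),
      ↑t ⊆ Function.support c ∧ (∀ i ∉ t, g i = 0) ∧ ∑ i ∈ t, g i • v i = 0 ∧
        ∃ i ∈ t, g i ≠ 0 := by
    simpa [linearIndepOn_iff''] using hdep
  have hg : ∑ i, g i • v i = 0 := by
    rw [← Finset.sum_subset (Finset.subset_univ t) fun i _ hi => by rw [hgt i hi, zero_smul]]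
    exact hgsum
  have hgc : ∀ i, c i = 0 → g i = 0 := fun i hci => hgt i fun hit => hts hit hci
  clear hgsum hgt hts t
  wlog hpos : 0 < g i₀ generalizing g
  · exact this (-g) (by simpa using hgi₀) (by simp [hg]) (fun i hi => by simp [hgc i hi])
      (by simpa using lt_of_le_of_ne (not_lt.mp hpos) hgi₀)
  -- Subtract the largest multiple of `g` that keeps all coefficients nonnegative.
  obtain ⟨j, hj, hjmin⟩ := Finset.exists_min_image (Finset.univ.filter (0 < g ·))
    (fun i => c i / g i) ⟨i₀, by simpa using hpos⟩
  replace hj : 0 < g j := by simpa using hj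
  set τ := c j / g j
  have hτ : 0 ≤ τ := div_nonneg (hc j) hj.le
  refine ⟨c - τ • g, fun i => ?_, ?_, ?_⟩
  · rcases le_or_gt (g i) 0 with hgi | hgi
    · have : 0 ≤ c i := hc i
      simp only [Pi.zero_apply, Pi.sub_apply, Pi.smul_apply, smul_eq_mul]
      nlinarith
    · have := (le_div_iff₀ hgi).mp (hjmin i (by simpa using hgi))
      simp only [Pi.zero_apply, Pi.sub_apply, Pi.smul_apply, smul_eq_mul]
      linarith
  · simp [sub_smul, mul_smul, Finset.sum_sub_distrib, ← Finset.smul_sum, hg]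
  · refine Set.ssubset_iff_of_subset (fun i hi => ?_) |>.mpr ⟨j, ?_, ?_⟩
    · contrapose! hi
      simp [Function.notMem_support.mp hi, hgc i (Function.notMem_support.mp hi)]
    · exact fun hcj => hj.ne' (hgc j hcj)
    · simp [τ, hj.ne']

lemma exists_nonneg_sum_smul_eq_linearIndepOn_support {c : ι → ℝ} (hc : 0 ≤ c) :
    ∃ d : ι → ℝ, 0 ≤ d ∧ ∑ i, d i • v i = ∑ i, c i • v i ∧
      LinearIndepOn ℝ v (Function.support d) := by
  induction h : (Function.support c).ncard using Nat.strong_induction_on generalizing c with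
  | _ k ih =>
    by_cases hind : LinearIndepOn ℝ v (Function.support c)
    · exact ⟨c, hc, rfl, hind⟩
    obtain ⟨d, hd, hdc, hlt⟩ := exists_nonneg_sum_smul_eq_support_ssubset v hc hind
    obtain ⟨e, he, hed, hind'⟩ :=
      ih _ (h ▸ Set.ncard_lt_ncard hlt (Set.toFinite _)) hd rfl
    exact ⟨e, he, hed.trans hdc, hind'⟩

lemma isClosed_image_linearCombination_Ici_zero [TopologicalSpace E] [IsTopologicalAddGroup E]
    [ContinuousSMul ℝ E] [T2Space E] :
    IsClosed (Fintype.linearCombination ℝ v '' Ici 0) := by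
  classical
  have hsum : ∀ (s : Finset ι) (c : ι → ℝ), Function.support c ⊆ s →
      ∑ i : s, c i • v i = ∑ i, c i • v i := fun s c hcs => by
    rw [Finset.sum_coe_sort s fun i => c i • v i]
    exact Finset.sum_subset (Finset.subset_univ s) fun i _ his => by
      rw [Function.notMem_support.mp fun hi => his (hcs hi), zero_smul]
  have hunion : Fintype.linearCombination ℝ v '' Ici 0 =
      ⋃ (s : Finset ι) (_ : LinearIndepOn ℝ v s),
        Fintype.linearCombination ℝ (fun i : s => v i) '' Ici 0 := by
    refine Subset.antisymm ?_ (iUnion₂_subset fun s _ => ?_)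
    · rintro _ ⟨c, hc, rfl⟩
      obtain ⟨d, hd, hdc, hind⟩ := exists_nonneg_sum_smul_eq_linearIndepOn_support v hc
      refine mem_iUnion₂.mpr ⟨Finset.univ.filter (d · ≠ 0),
        by simpa [Function.support] using hind, fun i => d i, fun i => hd i, ?_⟩
      simp only [Fintype.linearCombination_apply]
      rw [hsum _ d (by simp), hdc]
    · rintro _ ⟨c, hc, rfl⟩
      refine ⟨Function.extend Subtype.val c 0, fun i => ?_, ?_⟩
      · by_cases hi : ∃ a : s, ↑a = i
        · obtain ⟨a, rfl⟩ := hi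
          simpa [Subtype.val_injective.extend_apply] using hc a
        · simp [Function.extend_apply' _ _ _ hi]
      · simp only [Fintype.linearCombination_apply]
        rw [← hsum s]
        · simp
        · intro i hi
          by_contra his
          exact hi (Function.extend_apply' _ _ _ fun ⟨a, ha⟩ => his (ha ▸ a.2))
  rw [hunion]
  refine isClosed_iUnion_of_finite fun s => isClosed_iUnion_of_finite fun hind => ?_
  exact (LinearMap.isClosedEmbedding_of_injective (LinearMap.ker_eq_bot.mpr
    hind.fintypeLinearCombination_injective)).isClosedMap _ isClosed_Ici

end ConicCaratheodory

lemma IsPolyCone.exists_eq_image {n : ℕ} {C : Set (EuclideanSpace ℝ (Fin n))}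
    (h : IsPolyCone C) :
    ∃ (m : ℕ) (v : Fin m → EuclideanSpace ℝ (Fin n)),
      C = Fintype.linearCombination ℝ v '' Ici 0 := by
  obtain ⟨m, v, rfl⟩ := h
  refine ⟨m, v, ?_⟩
  ext x
  simp [Fintype.linearCombination_apply, eq_comm, Pi.le_def]

lemma IsPolyCone.convex_s5 {n : ℕ} {C : Set (EuclideanSpace ℝ (Fin n))} (h : IsPolyCone C) :
    Convex ℝ C := by
  obtain ⟨m, v, rfl⟩ := h.exists_eq_image
  exact (convex_Ici 0).linear_image _

lemma IsPolyCone.isClosed_s5 {n : ℕ} {C : Set (EuclideanSpace ℝ (Fin n))} (h : IsPolyCone C) :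
    IsClosed C := by
  obtain ⟨m, v, rfl⟩ := h.exists_eq_image
  exact isClosed_image_linearCombination_Ici_zero v

lemma IsPolyCone.nonempty {n : ℕ} {C : Set (EuclideanSpace ℝ (Fin n))} (h : IsPolyCone C) :
    C.Nonempty := by
  obtain ⟨m, v, rfl⟩ := h.exists_eq_image
  exact ⟨0, 0, mem_Ici.mpr le_rfl, map_zero _⟩

lemma exists_pos_add_smul_sub_mem_of_mem_intrinsicInterior {E : Type*} [AddCommGroup E]
    [Module ℝ E] [TopologicalSpace E] [IsTopologicalAddGroup E] [ContinuousSMul ℝ E]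
    {C : Set E} {x y : E} (hx : x ∈ intrinsicInterior ℝ C) (hy : y ∈ C) :
    ∃ ε : ℝ, 0 < ε ∧ x + ε • (x - y) ∈ C := by
  obtain ⟨p, hp, rfl⟩ := mem_intrinsicInterior.mp hx
  let γ : ℝ → affineSpan ℝ C := fun ε =>
    ⟨ε • ((p : E) -ᵥ y) +ᵥ (p : E),
      AffineSubspace.smul_vsub_vadd_mem _ ε p.2 (subset_affineSpan ℝ C hy) p.2⟩
  have hγ : Continuous γ := by fun_prop
  have hγ0 : γ 0 = p := by simp [γ]
  have hev : ∀ᶠ ε in 𝓝[>] (0 : ℝ), γ ε ∈ interior ((↑) ⁻¹' C) :=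
    (hγ.tendsto 0).eventually (hγ0 ▸ isOpen_interior.mem_nhds hp) |>.filter_mono
      nhdsWithin_le_nhds
  obtain ⟨ε, hε, hεpos⟩ := (hev.and self_mem_nhdsWithin).exists
  refine ⟨ε, hεpos, ?_⟩
  simpa [γ, add_comm] using interior_subset hε

lemma IsFaceOf.subset_of_mem_intrinsicInterior {n : ℕ} {G C : Set (EuclideanSpace ℝ (Fin n))}
    (hG : IsFaceOf G C) {x : EuclideanSpace ℝ (Fin n)} (hx : x ∈ intrinsicInterior ℝ C)
    (hxG : x ∈ G) : C ⊆ G := by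
  obtain rfl | ⟨l, hl, rfl⟩ := hG
  · exact subset_rfl
  intro y hy
  obtain ⟨ε, hε, hmem⟩ := exists_pos_add_smul_sub_mem_of_mem_intrinsicInterior hx hy
  have := hl _ hmem
  simp only [map_add, map_smul, map_sub, hxG.2, smul_eq_mul] at this
  exact ⟨hy, le_antisymm (hl y hy) (by nlinarith)⟩

section Argmin

variable {n : ℕ}

lemma mem_argminSet {ω : EuclideanSpace ℝ (Fin n)} {i : Fin n} :
    i ∈ argminSet ω ↔ ∀ k, ω i ≤ ω k := by
  classical
  simp [argminSet]

lemma mem_coneW_iff_subset_argminSet {A : Finset (Fin n)} {ω : EuclideanSpace ℝ (Fin n)} :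
    ω ∈ coneW A ↔ A ⊆ argminSet ω := by
  simp only [coneW, mem_ofPred_eq, Finset.subset_iff, mem_argminSet]

lemma setOf_exists_mem_coneW (k : ℕ) :
    {ω | ∃ A : Finset (Fin n), k ≤ A.card ∧ ω ∈ coneW A} =
      {ω : EuclideanSpace ℝ (Fin n) | k ≤ (argminSet ω).card} := by
  ext ω
  simp only [mem_ofPred_eq, mem_coneW_iff_subset_argminSet]
  exact ⟨fun ⟨A, hk, hA⟩ => hk.trans (Finset.card_le_card hA), fun hk => ⟨_, hk, subset_rfl⟩⟩

lemma mem_intrinsicInterior_coneW_argminSet (ω : EuclideanSpace ℝ (Fin n)) :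
    ω ∈ intrinsicInterior ℝ (coneW (argminSet ω)) := by
  set A := argminSet ω
  have hspan : ∀ z ∈ affineSpan ℝ (coneW A), ∀ i ∈ A, ∀ j ∈ A, z i = z j := by
    intro z hz
    refine affineSpan_induction (p := fun z => ∀ i ∈ A, ∀ j ∈ A, z i = z j) hz
      (fun z hz i hi j hj => le_antisymm (hz i hi j) (hz j hj i))
      (fun c u w p hu hw hp i hi j hj => ?_)
    simp [hu i hi j hj, hw i hi j hj, hp i hi j hj]
  let U : Set (EuclideanSpace ℝ (Fin n)) := ⋂ i ∈ A, ⋂ k ∈ Aᶜ, {z | z i < z k}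
  have hU : IsOpen U := isOpen_biInter_finset fun i _ => isOpen_biInter_finset fun k _ =>
    isOpen_lt (EuclideanSpace.proj i).continuous (EuclideanSpace.proj k).continuous
  have hωU : ω ∈ U := by
    simp only [U, mem_iInter, Finset.mem_compl, mem_ofPred_eq]
    intro i hi k hk
    obtain ⟨j, hj⟩ := not_forall.mp (mt mem_argminSet.mpr hk)
    exact (mem_argminSet.mp hi j).trans_lt (not_le.mp hj)
  have hωA : ω ∈ coneW A := mem_coneW_iff_subset_argminSet.mpr subset_rfl
  refine mem_intrinsicInterior.mpr ⟨⟨ω, subset_affineSpan ℝ _ hωA⟩,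
    mem_interior_iff_mem_nhds.mpr ?_, rfl⟩
  refine mem_of_superset ((hU.preimage continuous_subtype_val).mem_nhds hωU) fun z hz i hi k => ?_
  by_cases hk : k ∈ A
  · exact (hspan z z.2 i hi k hk).le
  · simp only [U, mem_preimage, mem_iInter, Finset.mem_compl, mem_ofPred_eq] at hz
    exact (hz i hi k hk).le

lemma sub_smul_single_apply (x : EuclideanSpace ℝ (Fin n)) (δ : ℝ) (i k : Fin n) :
    (x - δ • EuclideanSpace.single i (1 : ℝ)) k = if k = i then x k - δ else x k := by
  split_ifs with h <;> simp [h]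

lemma argminSet_sub_smul_single_subset {x : EuclideanSpace ℝ (Fin n)} {i : Fin n}
    (hi : i ∈ argminSet x) {δ : ℝ} (hδ : 0 < δ) :
    argminSet (x - δ • EuclideanSpace.single i (1 : ℝ)) ⊆ {i} := by
  intro j hj
  by_contra hji
  have := mem_argminSet.mp hj i
  simp only [sub_smul_single_apply, if_neg (Finset.mem_singleton.not.mp hji), if_true] at this
  linarith [mem_argminSet.mp hi j]

lemma eventually_argminSet_subset_sub_smul_single {x : EuclideanSpace ℝ (Fin n)} {i : Fin n}
    (hi : i ∉ argminSet x) :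
    ∀ᶠ δ in 𝓝 (0 : ℝ), argminSet x ⊆ argminSet (x - δ • EuclideanSpace.single i (1 : ℝ)) := by
  obtain ⟨k₀, hk₀⟩ := not_forall.mp (mt mem_argminSet.mpr hi)
  filter_upwards [eventually_lt_nhds (sub_pos.mpr (not_le.mp hk₀))] with δ hδ j hj
  rw [mem_argminSet] at hj ⊢
  intro k
  have hji : j ≠ i := fun h => hi (h ▸ mem_argminSet.mpr hj)
  simp only [sub_smul_single_apply, if_neg hji]
  split_ifs with hki
  · linarith [hj k₀, hki ▸ hδ]
  · exact hj k

lemma mem_argminSet_iff_not_frequently {k : ℕ} (hk : 2 ≤ k) {x : EuclideanSpace ℝ (Fin n)}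
    (hx : k ≤ (argminSet x).card) (i : Fin n) :
    i ∈ argminSet x ↔ ¬ ∃ᶠ δ in 𝓝[>] (0 : ℝ),
      x - δ • EuclideanSpace.single i (1 : ℝ) ∈ {ω | k ≤ (argminSet ω).card} := by
  refine ⟨fun hi => ?_, fun hfreq => ?_⟩
  · refine not_frequently.mpr (eventually_nhdsWithin_of_forall fun δ hδ hmem => ?_)
    have := Finset.card_le_card (argminSet_sub_smul_single_subset hi (mem_Ioi.mp hδ))
    simp only [mem_ofPred_eq, Finset.card_singleton] at hmem this
    omega
  · by_contra hi
    exact hfreq ((eventually_argminSet_subset_sub_smul_single hi).filter_mono nhdsWithin_le_nhds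
      |>.frequently.mono fun δ hsub => hx.trans (Finset.card_le_card hsub))

end Argmin

lemma PolyFan.subset_support {n : ℕ} (F : PolyFan n) {C : Set (EuclideanSpace ℝ (Fin n))}
    (hC : C ∈ F.cones) : C ⊆ F.support :=
  subset_biUnion_of_mem (u := id) hC

lemma PolyFan.frequently_sub_smul_mem_support_of_mem_intrinsicInterior {n : ℕ} (F : PolyFan n)
    {C : Set (EuclideanSpace ℝ (Fin n))} (hC : C ∈ F.cones)
    {x y : EuclideanSpace ℝ (Fin n)} (hx : x ∈ intrinsicInterior ℝ C)
    (hy : y ∈ intrinsicInterior ℝ C) (v : EuclideanSpace ℝ (Fin n))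
    (hfreq : ∃ᶠ δ in 𝓝[>] (0 : ℝ), x - δ • v ∈ F.support) :
    ∃ᶠ δ in 𝓝[>] (0 : ℝ), y - δ • v ∈ F.support := by
  obtain ⟨D, hD, hfreqD⟩ : ∃ D ∈ F.cones, ∃ᶠ δ in 𝓝[>] (0 : ℝ), x - δ • v ∈ D :=
    F.finite.frequently_exists.mp (by simpa only [PolyFan.support, mem_iUnion₂, exists_prop]
      using hfreq)
  have hxD : x ∈ D := by
    refine (F.poly D hD).isClosed_s5.mem_of_frequently_of_tendsto hfreqD ?_
    have : Tendsto (fun δ : ℝ => x - δ • v) (𝓝 0) (𝓝 (x - (0 : ℝ) • v)) :=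
      tendsto_const_nhds.sub (tendsto_id.smul_const v)
    simpa using this.mono_left nhdsWithin_le_nhds
  have hCD : C ⊆ D := fun z hz =>
    ((F.inter_face C hC D hD).subset_of_mem_intrinsicInterior hx
      ⟨intrinsicInterior_subset hx, hxD⟩ hz).2
  obtain ⟨ε, hε, hyε⟩ :=
    exists_pos_add_smul_sub_mem_of_mem_intrinsicInterior hy (intrinsicInterior_subset hx)
  -- `y - (ε / (1 + ε)) δ • v` is a convex combination of `x - δ • v` and `y + ε • (y - x)`.
  set t := ε / (1 + ε)
  have ht : 0 < t := by positivity
  have hmem : ∀ δ : ℝ, x - δ • v ∈ D → y - (t * δ) • v ∈ D := fun δ hδ => by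
    have hcomb : y - (t * δ) • v = t • (x - δ • v) + (1 / (1 + ε)) • (y + ε • (y - x)) := by
      simp only [t]
      match_scalars <;> field_simp
      ring
    rw [hcomb]
    exact (F.poly D hD).convex_s5 hδ (hCD hyε) ht.le (by positivity)
      (by simp only [t]; field_simp; ring)
  have hscale : Tendsto (t * ·) (𝓝[>] (0 : ℝ)) (𝓝[>] 0) := by
    simpa only [comap_mulLeft_nhdsGT_zero ht] using tendsto_comap (f := (t * ·)) (x := 𝓝[>] 0)
  exact hscale.frequently (hfreqD.mono fun δ hδ => F.subset_support hD (hmem δ hδ))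

theorem stmt5_general {n m : ℕ} (hmn : m < n) (F : PolyFan n)
    (hsupp : F.support = {ω | ∃ A : Finset (Fin n), n - m + 1 ≤ A.card ∧ ω ∈ coneW A}) :
    ∀ C ∈ F.cones, ∃ A : Finset (Fin n), n - m + 1 ≤ A.card ∧
      relint C ⊆ relint (coneW A) := by
  intro C hC
  rw [setOf_exists_mem_coneW] at hsupp
  have hcard : ∀ y ∈ relint C, n - m + 1 ≤ (argminSet y).card := fun y hy => by
    simpa [hsupp] using F.subset_support hC (intrinsicInterior_subset hy)
  obtain ⟨x, hx⟩ := (F.poly C hC).nonempty.intrinsicInterior (F.poly C hC).convex_s5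
  refine ⟨argminSet x, hcard x hx, fun y hy => ?_⟩
  have hargmin : argminSet y = argminSet x := by
    ext i
    rw [mem_argminSet_iff_not_frequently (by omega) (hcard y hy),
      mem_argminSet_iff_not_frequently (by omega) (hcard x hx), ← hsupp]
    exact not_congr ⟨F.frequently_sub_smul_mem_support_of_mem_intrinsicInterior hC hy hx _,
      F.frequently_sub_smul_mem_support_of_mem_intrinsicInterior hC hx hy _⟩
  exact hargmin ▸ mem_intrinsicInterior_coneW_argminSet y

/-- every fan with support `|W_n^m|` refines `W_n^m`: each relatively open
cone of `F` is contained in a relatively open cone `C̊_A` of `W_n^m`. -/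
theorem stmt5 {n m : ℕ} (hm : 0 < m) (hmn : m < n) (F : PolyFan n)
    (hsupp : F.support = {ω | ∃ A : Finset (Fin n), n - m + 1 ≤ A.card ∧ ω ∈ coneW A}) :
    ∀ C ∈ F.cones, ∃ A : Finset (Fin n), n - m + 1 ≤ A.card ∧
      relint C ⊆ relint (coneW A) :=
  stmt5_general hmn F hsupp
end
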